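/- Let 𝒞 be a category and let C be a class of objects of 𝒞 closed under retract. Let X be a pro-object indexed by a directed set I such that for all t ≥ s the structure map X_t → X_s has a left inverse (so X_t is a retract of X_s). If X belongs to C essentially levelwise, then there is an element s of I such that X_t belongs to C for all t ≥ s. -/

import Mathlib

open CategoryTheory CategoryTheory.Limits Opposite

universe v u

namespace ProPaper

variable (C : Type u) [Category.{v} C]

/-- A pro-object: a diagram indexed by a small cofiltered category. -/
structure ProObj : Type (max u (v + 1)) where
  I : Type v
  [instCat : SmallCategory I]
  [instCof : IsCofiltered I]
  diag : I ⥤ C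

attribute [instance] ProObj.instCat ProObj.instCof

variable {C}

def ProObj.of (I : Type v) [SmallCategory I] [IsCofiltered I] (D : I ⥤ C) : ProObj C :=
  ⟨I, D⟩

/-- The functor `C ⥤ Type` corepresented by a pro-object:
`X ↦ colim_t Hom(X_t, -)`. -/
noncomputable def ProObj.hat (X : ProObj C) : C ⥤ Type v :=
  colimit (X.diag.op ⋙ coyoneda)

/-- The pro-category: `Hom(X, Y) = lim_s colim_t Hom(X_t, Y_s)`, encoded as
natural transformations `hat Y ⟶ hat X`. -/
noncomputable instance : Category (ProObj C) where
  Hom X Y := Opposite.op X.hat ⟶ Opposite.op Y.hat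
  id X := 𝟙 (Opposite.op X.hat)
  comp f g := f ≫ g
  id_comp f := Category.id_comp f
  comp_id f := Category.comp_id f
  assoc f g h := Category.assoc f g h

/-- The pro-map induced by a level map (a natural transformation of diagrams). -/
noncomputable def levelHom {I : Type v} [SmallCategory I] [IsCofiltered I]
    {Xd Yd : I ⥤ C} (η : Xd ⟶ Yd) :
    (ProObj.of I Xd : ProObj C) ⟶ ProObj.of I Yd :=
  Quiver.Hom.op
    (colimMap (F := Xd.op ⋙ coyoneda) (G := Yd.op ⋙ coyoneda) (Functor.whiskerRight (NatTrans.op η) coyoneda) :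
      (ProObj.of I Yd : ProObj C).hat ⟶ (ProObj.of I Xd : ProObj C).hat)

/-- A level map of pro-objects, bundled. -/
structure LevelMap : Type (max u (v + 1)) where
  I : Type v
  [instCat : SmallCategory I]
  [instCof : IsCofiltered I]
  {Xd Yd : I ⥤ C}
  η : Xd ⟶ Yd

attribute [instance] LevelMap.instCat LevelMap.instCof

noncomputable def LevelMap.hom (ℓ : LevelMap (C := C)) :
    (ProObj.of ℓ.I ℓ.Xd : ProObj C) ⟶ ProObj.of ℓ.I ℓ.Yd :=
  levelHom ℓ.η

/-- `f` is an essentially levelwise `M`-map. -/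
def essLevelwise (M : MorphismProperty C) {X Y : ProObj C} (f : X ⟶ Y) : Prop :=
  ∃ ℓ : LevelMap (C := C), (∀ i : ℓ.I, M (ℓ.η.app i)) ∧
    Nonempty (Arrow.mk f ≅ Arrow.mk ℓ.hom)

/-- An object of pro-C belongs to a class `P` of objects essentially levelwise. -/
def essLevelwiseObj (P : C → Prop) (X : ProObj C) : Prop :=
  ∃ Y : ProObj C, (∀ i : Y.I, P (Y.diag.obj i)) ∧ Nonempty (X ≅ Y)


/-- `f` is a retract of `g` (in the arrow category). -/
def IsRetractHom {D : Type*} [Category D] {X Y X' Y' : D}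
    (f : X ⟶ Y) (g : X' ⟶ Y') : Prop :=
  ∃ (i : X ⟶ X') (r : X' ⟶ X) (i' : Y ⟶ Y') (r' : Y' ⟶ Y),
    i ≫ r = 𝟙 X ∧ i' ≫ r' = 𝟙 Y ∧ i ≫ g = f ≫ i' ∧ r ≫ f = g ≫ r'

/-- An object `X` is a retract of `Y`. -/
def IsRetractObj {D : Type*} [Category D] (X Y : D) : Prop :=
  ∃ (i : X ⟶ Y) (r : Y ⟶ X), i ≫ r = 𝟙 X

/-- `inj-M`: the maps with the right lifting property with respect to `M`. -/
def injP {D : Type*} [Category D] (M : MorphismProperty D) : MorphismProperty D :=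
  fun _ _ p => ∀ ⦃A B : D⦄ (i : A ⟶ B), M i → HasLiftingProperty i p

/-- `proj-M`: the maps with the left lifting property with respect to `M`. -/
def projP {D : Type*} [Category D] (M : MorphismProperty D) : MorphismProperty D :=
  fun _ _ i => ∀ ⦃A B : D⦄ (p : A ⟶ B), M p → HasLiftingProperty i p

section FMS

variable {A : Type*} [Preorder A]

/-- The axioms for a filtered model structure `(A, C, W, F)`. -/
structure IsFilteredMS (Cof W Fib : A → MorphismProperty C) : Prop where
  cof_anti : ∀ ⦃a b : A⦄, a ≤ b → Cof b ≤ Cof a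
  weq_anti : ∀ ⦃a b : A⦄, a ≤ b → W b ≤ W a
  fib_mono : ∀ ⦃a b : A⦄, a ≤ b → Fib a ≤ Fib b
  /-- Axiom 4.2: up-to-refinement two-out-of-three. -/
  two_out_of_three : ∀ a : A, ∃ b : A,
    (∀ ⦃X Y Z : C⦄ (f : X ⟶ Y) (g : Y ⟶ Z), W b f → W b g → W a (f ≫ g)) ∧
    (∀ ⦃X Y Z : C⦄ (f : X ⟶ Y) (g : Y ⟶ Z), W b f → W b (f ≫ g) → W a g) ∧
    (∀ ⦃X Y Z : C⦄ (f : X ⟶ Y) (g : Y ⟶ Z), W b g → W b (f ≫ g) → W a f)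
  /-- Axiom 4.3: closure properties. -/
  weq_retract : ∀ (a : A) ⦃X Y X' Y' : C⦄ (f : X ⟶ Y) (g : X' ⟶ Y'),
    IsRetractHom f g → W a g → W a f
  cof_retract : ∀ (a : A) ⦃X Y X' Y' : C⦄ (f : X ⟶ Y) (g : X' ⟶ Y'),
    IsRetractHom f g → Cof a g → Cof a f
  fib_retract : ∀ (a : A) ⦃X Y X' Y' : C⦄ (f : X ⟶ Y) (g : X' ⟶ Y'),
    IsRetractHom f g → Fib a g → Fib a f
  cof_comp : ∀ (a : A) ⦃X Y Z : C⦄ (f : X ⟶ Y) (g : Y ⟶ Z),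
    Cof a f → Cof a g → Cof a (f ≫ g)
  fib_comp : ∀ (a : A) ⦃X Y Z : C⦄ (f : X ⟶ Y) (g : Y ⟶ Z),
    Fib a f → Fib a g → Fib a (f ≫ g)
  cof_cobase : ∀ (a : A) ⦃Z X Y P : C⦄ (f : Z ⟶ X) (g : Z ⟶ Y) (h : X ⟶ P) (k : Y ⟶ P),
    IsPushout f g h k → Cof a f → Cof a k
  fib_base : ∀ (a : A) ⦃P X Y Z : C⦄ (h : P ⟶ X) (k : P ⟶ Y) (f : X ⟶ Z) (g : Y ⟶ Z),
    IsPullback h k f g → Fib a f → Fib a k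
  /-- Axiom 4.4: `inj-C_a ⊆ W_a ∩ F_a` and `proj-F_a ⊆ W_a ∩ C_a`. -/
  injC_le : ∀ a : A, injP (Cof a) ≤ W a ⊓ Fib a
  projF_le : ∀ a : A, projP (Fib a) ≤ W a ⊓ Cof a
  /-- Axiom 4.5: factorizations. -/
  fact_cof : ∀ (a : A) ⦃X Y : C⦄ (f : X ⟶ Y),
    ∃ (Z : C) (i : X ⟶ Z) (p : Z ⟶ Y), Cof a i ∧ injP (Cof a) p ∧ i ≫ p = f
  fact_fib : ∀ (a : A) ⦃X Y : C⦄ (f : X ⟶ Y),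
    ∃ (Z : C) (j : X ⟶ Z) (q : Z ⟶ Y), projP (Fib a) j ∧ Fib a q ∧ j ≫ q = f
  /-- Axiom 4.6: factorization of weak equivalences. -/
  weq_fact : ∀ (a : A) ⦃X Y : C⦄ (f : X ⟶ Y), W a f → ∃ b : A, a ≤ b ∧
    ∃ (Z : C) (i : X ⟶ Z) (p : Z ⟶ Y), projP (Fib b) i ∧ injP (Cof b) p ∧ i ≫ p = f

/-- A proper filtered model structure: Axioms 4.9 and 4.10 in addition. -/
structure IsProperFilteredMS (Cof W Fib : A → MorphismProperty C)
    extends IsFilteredMS Cof W Fib : Prop where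
  weq_cobase : ∀ (a : A) ⦃Z X Y P : C⦄ (f : Z ⟶ X) (g : Z ⟶ Y) (h : X ⟶ P) (k : Y ⟶ P),
    IsPushout f g h k → Cof a f → W a g → W a h
  weq_base : ∀ (a : A) ⦃P X Y Z : C⦄ (h : P ⟶ X) (k : P ⟶ Y) (f : X ⟶ Z) (g : Y ⟶ Z),
    IsPullback h k f g → (∃ b : A, Fib b f) → W a g → W a h

/-- The union `F = ∪ₐ Fₐ`. -/
def unionProp (F : A → MorphismProperty C) : MorphismProperty C :=
  fun _ _ f => ∃ a : A, F a f

/-- The union `inj-C = ∪ₐ inj-Cₐ`. -/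
def injCUnion (Cof : A → MorphismProperty C) : MorphismProperty C :=
  fun _ _ f => ∃ a : A, injP (Cof a) f

end FMS


/-- A pro-object indexed by a (nonempty, upward) directed set `I`;
the diagram is contravariant, i.e. for `s ≤ t` there is a structure map
`X_t ⟶ X_s`. -/
structure DirProObj : Type (max u (v + 1)) where
  I : Type v
  [instPre : Preorder I]
  [instDir : IsDirected I (· ≤ ·)]
  [instNe : Nonempty I]
  diag : Iᵒᵖ ⥤ C

attribute [instance] DirProObj.instPre DirProObj.instDir DirProObj.instNe

/-- The pro-object underlying a directed-set-indexed pro-object. -/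
def DirProObj.pro (X : DirProObj (C := C)) : ProObj C :=
  ProObj.of (X.I)ᵒᵖ X.diag

/-- A level map indexed by a cofinite directed set. -/
structure CofDirLevelMap : Type (max u (v + 1)) where
  I : Type v
  [instPre : Preorder I]
  [instDir : IsDirected I (· ≤ ·)]
  [instNe : Nonempty I]
  cofinite : ∀ t : I, {s : I | s ≤ t}.Finite
  {Xd Yd : Iᵒᵖ ⥤ C}
  η : Xd ⟶ Yd

attribute [instance] CofDirLevelMap.instPre CofDirLevelMap.instDir CofDirLevelMap.instNe

noncomputable def CofDirLevelMap.hom (ℓ : CofDirLevelMap (C := C)) :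
    (ProObj.of (ℓ.I)ᵒᵖ ℓ.Xd : ProObj C) ⟶ ProObj.of (ℓ.I)ᵒᵖ ℓ.Yd :=
  levelHom ℓ.η

section Matching

variable [HasLimits C]

namespace CofDirLevelMap

variable (ℓ : CofDirLevelMap (C := C))

/-- The set of indices strictly below `t`. -/
abbrev Below (t : ℓ.I) : Type v := {s : ℓ.I // s < t}

instance (t : ℓ.I) : Preorder (ℓ.Below t) :=
  Subtype.preorder _

/-- The inclusion of the indices strictly below `t`. -/
def belowIncl (t : ℓ.I) : ℓ.Below t ⥤ ℓ.I :=
  Monotone.functor (f := fun s => s.1) (fun _ _ h => h)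

/-- `lim_{s < t} D_s`. -/
noncomputable def limBelow (D : (ℓ.I)ᵒᵖ ⥤ C) (t : ℓ.I) : C :=
  limit ((ℓ.belowIncl t).op ⋙ D)

/-- The cone over the diagram strictly below `t` with apex `D_t`. -/
noncomputable def belowCone (D : (ℓ.I)ᵒᵖ ⥤ C) (t : ℓ.I) :
    Cone ((ℓ.belowIncl t).op ⋙ D) where
  pt := D.obj (op t)
  π :=
    { app := fun s => D.map (Quiver.Hom.op (homOfLE (le_of_lt s.unop.2)))
      naturality := fun s s' g => by
        dsimp
        rw [Category.id_comp, ← D.map_comp]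
        rfl }

/-- The canonical map `D_t ⟶ lim_{s < t} D_s`. -/
noncomputable def toLimBelow (D : (ℓ.I)ᵒᵖ ⥤ C) (t : ℓ.I) :
    D.obj (op t) ⟶ ℓ.limBelow D t :=
  limit.lift _ (ℓ.belowCone D t)

/-- The target of the relative matching map:
`lim_{s<t} X_s ×_{lim_{s<t} Y_s} Y_t`. -/
noncomputable def matchObj (t : ℓ.I) : C :=
  pullback (limMap (Functor.whiskerLeft (ℓ.belowIncl t).op ℓ.η)) (ℓ.toLimBelow ℓ.Yd t)

/-- The relative matching map `M_t f : X_t ⟶ lim_{s<t} X_s ×_{lim_{s<t} Y_s} Y_t`. -/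
noncomputable def matchingMap (t : ℓ.I) : ℓ.Xd.obj (op t) ⟶ ℓ.matchObj t :=
  pullback.lift (ℓ.toLimBelow ℓ.Xd t) (ℓ.η.app (op t)) (by
    apply limit.hom_ext
    intro j
    simp only [toLimBelow, Category.assoc, limMap_π, limit.lift_π, limit.lift_π_assoc,
      Functor.whiskerLeft_app, belowCone]
    exact ℓ.η.naturality _)

end CofDirLevelMap

/-- `f` is a special `M`-map: it is isomorphic to a cofinite directed level map
all of whose relative matching maps belong to `M`. -/
def specialMap (M : MorphismProperty C) {X Y : ProObj C} (f : X ⟶ Y) : Prop :=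
  ∃ ℓ : CofDirLevelMap (C := C), (∀ t : ℓ.I, M (ℓ.matchingMap t)) ∧
    Nonempty (Arrow.mk f ≅ Arrow.mk ℓ.hom)

end Matching

section ProClasses

variable {A : Type*} [Preorder A]

/-- Cofibrations in `pro-C`: essentially levelwise `C_a`-maps for every `a`. -/
def proCof (Cof : A → MorphismProperty C) : MorphismProperty (ProObj C) :=
  fun _ _ f => ∀ a : A, essLevelwise (Cof a) f

/-- Weak equivalences in `pro-C`: essentially levelwise `W_a`-maps for every `a`. -/
def proWeq (W : A → MorphismProperty C) : MorphismProperty (ProObj C) :=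
  fun _ _ f => ∀ a : A, essLevelwise (W a) f

/-- Fibrations in `pro-C`: retracts of special `F`-maps, `F = ∪ₐ Fₐ`. -/
def proFib [HasLimits C] (Fib : A → MorphismProperty C) : MorphismProperty (ProObj C) :=
  fun _ _ f => ∃ (X' Y' : ProObj C) (g : X' ⟶ Y'),
    specialMap (unionProp Fib) g ∧ IsRetractHom f g

end ProClasses

section ModelStructure

variable {D : Type*} [Category D]

/-- The classes `(Cof, W, Fib)` form a model structure on `D`. -/
structure IsModelStructure (Cof W Fib : MorphismProperty D) : Prop where
  weq_comp : ∀ ⦃X Y Z : D⦄ (f : X ⟶ Y) (g : Y ⟶ Z), W f → W g → W (f ≫ g)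
  weq_cancel_left : ∀ ⦃X Y Z : D⦄ (f : X ⟶ Y) (g : Y ⟶ Z), W f → W (f ≫ g) → W g
  weq_cancel_right : ∀ ⦃X Y Z : D⦄ (f : X ⟶ Y) (g : Y ⟶ Z), W g → W (f ≫ g) → W f
  weq_retract : ∀ ⦃X Y X' Y' : D⦄ (f : X ⟶ Y) (g : X' ⟶ Y'),
    IsRetractHom f g → W g → W f
  cof_retract : ∀ ⦃X Y X' Y' : D⦄ (f : X ⟶ Y) (g : X' ⟶ Y'),
    IsRetractHom f g → Cof g → Cof f
  fib_retract : ∀ ⦃X Y X' Y' : D⦄ (f : X ⟶ Y) (g : X' ⟶ Y'),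
    IsRetractHom f g → Fib g → Fib f
  lift_acyclicCof_fib : ∀ ⦃A B X Y : D⦄ (i : A ⟶ B) (p : X ⟶ Y),
    Cof i → W i → Fib p → HasLiftingProperty i p
  lift_cof_acyclicFib : ∀ ⦃A B X Y : D⦄ (i : A ⟶ B) (p : X ⟶ Y),
    Cof i → Fib p → W p → HasLiftingProperty i p
  fact_acyclicCof_fib : ∀ ⦃X Y : D⦄ (f : X ⟶ Y),
    ∃ (Z : D) (i : X ⟶ Z) (p : Z ⟶ Y), Cof i ∧ W i ∧ Fib p ∧ i ≫ p = f
  fact_cof_acyclicFib : ∀ ⦃X Y : D⦄ (f : X ⟶ Y),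
    ∃ (Z : D) (i : X ⟶ Z) (p : Z ⟶ Y), Cof i ∧ Fib p ∧ W p ∧ i ≫ p = f

/-- The classes `(Cof, W, Fib)` form a proper model structure on `D`. -/
structure IsProperModelStructure (Cof W Fib : MorphismProperty D)
    extends IsModelStructure Cof W Fib : Prop where
  weq_cobase : ∀ ⦃Z X Y P : D⦄ (f : Z ⟶ X) (g : Z ⟶ Y) (h : X ⟶ P) (k : Y ⟶ P),
    IsPushout f g h k → Cof f → W g → W h
  weq_base : ∀ ⦃P X Y Z : D⦄ (h : P ⟶ X) (k : P ⟶ Y) (f : X ⟶ Z) (g : Y ⟶ Z),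
    IsPullback h k f g → Fib f → W g → W h

end ModelStructure

section Constants

/-- The constant pro-object on an object of `C`. -/
def proConst (X : C) : ProObj C :=
  ProObj.of (Discrete PUnit.{v + 1}) ((Functor.const _).obj X)

/-- The constant pro-map on a morphism of `C`. -/
noncomputable def proConstHom {X Y : C} (f : X ⟶ Y) : proConst X ⟶ proConst Y :=
  levelHom ((Functor.const (Discrete PUnit.{v + 1})).map f)

end Constants

section Induced

variable {C' : Type u} [Category.{v} C']

/-- The levelwise action of a functor on pro-objects. -/
def ProObj.map (G : C ⥤ C') (X : ProObj C) : ProObj C' :=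
  ProObj.of X.I (X.diag ⋙ G)

/-- The levelwise action of a functor on level maps. -/
def LevelMap.map (G : C ⥤ C') (ℓ : LevelMap (C := C)) : LevelMap (C := C') :=
  { I := ℓ.I, η := Functor.whiskerRight ℓ.η G }

/-- `Gp : pro-C ⥤ pro-C'` is the functor induced by `G : C ⥤ C'`:
it acts levelwise on pro-objects and on level maps. -/
def IsProInduced (G : C ⥤ C') (Gp : ProObj C ⥤ ProObj C') : Prop :=
  (∀ X : ProObj C, Gp.obj X = ProObj.map G X) ∧
  (∀ ℓ : LevelMap (C := C),
    Nonempty (Arrow.mk (Gp.map ℓ.hom) ≅ Arrow.mk (LevelMap.hom (ℓ.map G))))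

end Induced


/-- Lemma 3.7 of the paper. If `C` is a class of objects
closed under retracts and `X` is a pro-object indexed by a directed set all of
whose structure maps admit left inverses, and `X` belongs to `C` essentially
levelwise, then there is an index `s` such that `X_t ∈ C` for all `t ≥ s`. -/
theorem statement_2 {𝒞 : Type u} [Category.{v} 𝒞] (P : 𝒞 → Prop)
    (hP : ∀ ⦃X Y : 𝒞⦄, IsRetractObj X Y → P Y → P X)
    (X : DirProObj (C := 𝒞))
    (hsplit : ∀ ⦃s t : X.I⦄ (h : s ≤ t),
      ∃ l : X.diag.obj (op s) ⟶ X.diag.obj (op t),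
        X.diag.map (Quiver.Hom.op (homOfLE h)) ≫ l = 𝟙 (X.diag.obj (op t)))
    (hlev : essLevelwiseObj P X.pro) :
    ∃ s : X.I, ∀ t : X.I, s ≤ t → P (X.diag.obj (op t)) := by
  classical
  obtain ⟨Y, hYP, ⟨e⟩⟩ := hlev
  obtain ⟨s₀⟩ := (inferInstance : Nonempty X.I)
  let D : ((X.I)ᵒᵖ)ᵒᵖ ⥤ 𝒞 ⥤ Type v := X.diag.op ⋙ coyoneda
  let E : (Y.I)ᵒᵖ ⥤ 𝒞 ⥤ Type v := Y.diag.op ⋙ coyoneda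
  have hXhat : X.pro.hat = colimit D := rfl
  let u : (Y.hat : 𝒞 ⥤ Type v) ⟶ colimit D := Quiver.Hom.unop e.hom
  let w : (colimit D : 𝒞 ⥤ Type v) ⟶ Y.hat := Quiver.Hom.unop e.inv
  have huw : w ≫ u = 𝟙 (colimit D) := by
    have h : (e.hom ≫ e.inv : Opposite.op (colimit D) ⟶ Opposite.op (colimit D)) =
        𝟙 (Opposite.op (colimit D)) := e.hom_inv_id
    have h' := congrArg Quiver.Hom.unop h
    exact h'
  let c := X.diag.obj (op s₀)
  let x₀ : (colimit D).obj c := (colimit.ι D (op (op s₀))).app c (𝟙 c)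
  -- find a representative of `w x₀` in the colimit defining `Y.hat`
  have hcE := isColimitOfPreserves ((evaluation 𝒞 (Type v)).obj c) (colimit.isColimit E)
  obtain ⟨j, g, hg⟩ := Types.jointly_surjective _ hcE (w.app c x₀)
  let d := Y.diag.obj j.unop
  have hg' : (colimit.ι E j).app c g = w.app c x₀ := hg
  let ν : E.obj j ⟶ colimit D := colimit.ι E j ≫ u
  -- find a representative of `ν (𝟙 d)`
  have hcX := isColimitOfPreserves ((evaluation 𝒞 (Type v)).obj d) (colimit.isColimit D)
  obtain ⟨k, f, hf⟩ := Types.jointly_surjective _ hcX (ν.app d (𝟙 d))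
  have hf' : (colimit.ι D k).app d f = ν.app d (𝟙 d) := hf
  -- `ν g = x₀`
  have hν : ν.app c g = x₀ := by
    have := types_congr_hom (congrArg (fun (z : (colimit D : 𝒞 ⥤ Type v) ⟶ colimit D) => z.app c)
      huw) x₀
    simp only [NatTrans.comp_app, types_comp_apply, NatTrans.id_app, types_id_apply] at this
    calc ν.app c g = u.app c ((colimit.ι E j).app c g) := rfl
      _ = u.app c (w.app c x₀) := by rw [hg']
      _ = x₀ := this
  -- compute `ν g` via naturality
  have hν2 : ν.app c g = (colimit.ι D k).app c (f ≫ g) := by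
    have hnat := types_congr_hom (ν.naturality (g : d ⟶ c)) (𝟙 d)
    simp only [types_comp_apply] at hnat
    have hEg : (E.obj j).map (g : d ⟶ c) (𝟙 d) = g := by
      simp [E, d]
    rw [hEg] at hnat
    have hnat2 : ν.app c g = (colimit D).map (g : d ⟶ c) (ν.app d (𝟙 d)) := hnat
    rw [hnat2, ← hf']
    have hnatι := types_congr_hom ((colimit.ι D k).naturality (g : d ⟶ c)) f
    simp only [types_comp_apply] at hnatι
    have hDg : (D.obj k).map (g : d ⟶ c) f = f ≫ g := by
      simp [D]
    rw [hDg] at hnatι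
    exact hnatι.symm
  -- equality in a filtered colimit of types
  have hcc := isColimitOfPreserves ((evaluation 𝒞 (Type v)).obj c) (colimit.isColimit D)
  have heq : ((((evaluation 𝒞 (Type v)).obj c).mapCocone (colimit.cocone D)).ι.app k) (f ≫ g) =
      ((((evaluation 𝒞 (Type v)).obj c).mapCocone (colimit.cocone D)).ι.app (op (op s₀))) (𝟙 c) := by
    show (colimit.ι D k).app c (f ≫ g) = (colimit.ι D (op (op s₀))).app c (𝟙 c)
    rw [← hν2, hν]
  obtain ⟨m, α, β, hm⟩ := (Types.FilteredColimit.isColimit_eq_iff _ hcc).mp heq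
  -- unravel the equality of morphisms
  have hm' : X.diag.map α.unop ≫ f ≫ g = X.diag.map β.unop := by
    have h1 : (D ⋙ (evaluation 𝒞 (Type v)).obj c).map α (f ≫ g) =
        X.diag.map α.unop ≫ f ≫ g := by
      simp [D]
    have h2 : (D ⋙ (evaluation 𝒞 (Type v)).obj c).map β (𝟙 c) =
        X.diag.map β.unop := by
      simp [D, c]
    rw [h1, h2] at hm
    exact hm
  set mI : X.I := m.unop.unop with hmI
  have hs₀m : s₀ ≤ mI := leOfHom β.unop.unop
  -- X_m is a retract of Y_j
  obtain ⟨l, hl⟩ := hsplit hs₀m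
  have hβ : (β.unop : op mI ⟶ op s₀) = Quiver.Hom.op (homOfLE hs₀m) := Subsingleton.elim _ _
  have hPm : P (X.diag.obj (op mI)) := by
    refine hP ⟨X.diag.map α.unop ≫ f, g ≫ l, ?_⟩ (hYP j.unop)
    have : (X.diag.map α.unop ≫ f ≫ g) ≫ l = 𝟙 (X.diag.obj (op mI)) := by
      rw [hm', hβ]; exact hl
    simpa using this
  refine ⟨mI, fun t ht => ?_⟩
  obtain ⟨l', hl'⟩ := hsplit ht
  exact hP ⟨X.diag.map (Quiver.Hom.op (homOfLE ht)), l', hl'⟩ hPm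

end ProPaper
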